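/- Let n ≥ 1 and let S_n be the star graph on vertices {0,1,...,n-1}. Let M be any of the monoids PsEnd(S_n), PswEnd(S_n), IEnd(S_n), PEnd(S_n), PwEnd(S_n) (under composition of partial transformations), and let α ∈ M. Then α is a regular element of M if and only if 0 ∈ dom(α) or im(α) = {0} or 0 ∉ im(α). -/

import Mathlib

/-!
If `α = α β α`, then `β` sends every `y ∈ im α` to a preimage of `y`, and since `β` is at least
a weak endomorphism, any edge of `im α` is carried to an edge. Conversely, a choice of preimages
that lifts the edges of `im α` to edges is a partial automorphism of `S_n`, which lies in all five
monoids and is an inverse of `α`. So `α` is regular iff the edges of its image lift.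

In the star every edge of `im α` is `{0, b}`, and its lift is an edge iff exactly one of the
chosen preimages is the centre. If `α(0) = c` is defined, then `c` is an endpoint of every edge of
`im α`, so choosing `0` as the preimage of `c` works. If `0 ∉ dom α`, no preimage is the centre,
so the lift works only when `im α` has no edge, i.e. `0 ∉ im α` or `im α = {0}`.
-/

def pmul {V : Type*} (f g : V → Option V) : V → Option V := fun x => (f x).bind g

def pdom {V : Type*} (f : V → Option V) : Set V := {x | f x ≠ none}

def pim {V : Type*} (f : V → Option V) : Set V := {y | ∃ x, f x = some y}

def pker {V : Type*} (f : V → Option V) : V → V → Prop := fun x y => f x ≠ none ∧ f x = f y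

def PInj {V : Type*} (f : V → Option V) : Prop := ∀ u v a, f u = some a → f v = some a → u = v

def edge {n : ℕ} (u v : Fin n) : Prop := (u.val = 0 ∧ v.val ≠ 0) ∨ (v.val = 0 ∧ u.val ≠ 0)

def IsPEnd {n : ℕ} (α : Fin n → Option (Fin n)) : Prop :=
  ∀ u v a b, α u = some a → α v = some b → edge u v → edge a b

def IsPwEnd {n : ℕ} (α : Fin n → Option (Fin n)) : Prop :=
  ∀ u v a b, α u = some a → α v = some b → edge u v → a ≠ b → edge a b

def IsPsEnd {n : ℕ} (α : Fin n → Option (Fin n)) : Prop :=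
  ∀ u v a b, α u = some a → α v = some b → (edge u v ↔ edge a b)

def IsPswEnd {n : ℕ} (α : Fin n → Option (Fin n)) : Prop :=
  ∀ u v a b, α u = some a → α v = some b → ((edge u v ∧ a ≠ b) ↔ edge a b)

def PEndS (n : ℕ) : Set (Fin n → Option (Fin n)) := {α | IsPEnd α}
def PwEndS (n : ℕ) : Set (Fin n → Option (Fin n)) := {α | IsPwEnd α}
def PsEndS (n : ℕ) : Set (Fin n → Option (Fin n)) := {α | IsPsEnd α}
def PswEndS (n : ℕ) : Set (Fin n → Option (Fin n)) := {α | IsPswEnd α}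
def IEndS (n : ℕ) : Set (Fin n → Option (Fin n)) := {α | PInj α ∧ IsPEnd α}
def PAutS (n : ℕ) : Set (Fin n → Option (Fin n)) := {α | PInj α ∧ IsPsEnd α}

def RegularIn {V : Type*} (M : Set (V → Option V)) (a : V → Option V) : Prop :=
  ∃ b ∈ M, pmul (pmul a b) a = a

def GreenL {V : Type*} (M : Set (V → Option V)) (a b : V → Option V) : Prop :=
  (∃ g ∈ M, a = pmul g b) ∧ (∃ g ∈ M, b = pmul g a)

def GreenR {V : Type*} (M : Set (V → Option V)) (a b : V → Option V) : Prop :=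
  (∃ g ∈ M, a = pmul b g) ∧ (∃ g ∈ M, b = pmul a g)

def GreenH {V : Type*} (M : Set (V → Option V)) (a b : V → Option V) : Prop :=
  GreenL M a b ∧ GreenR M a b

def GreenJ {V : Type*} (M : Set (V → Option V)) (a b : V → Option V) : Prop :=
  (∃ g ∈ M, ∃ h ∈ M, a = pmul (pmul g b) h) ∧ (∃ g ∈ M, ∃ h ∈ M, b = pmul (pmul g a) h)

section PartialMaps

variable {V : Type*}

def IsPreimageChoice (α : V → Option V) (f : V → V) : Prop :=
  ∀ y ∈ pim α, α (f y) = some y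

lemma exists_isPreimageChoice (α : V → Option V) : ∃ f, IsPreimageChoice α f := by
  classical
  exact ⟨fun y => if h : y ∈ pim α then h.choose else y,
    fun y hy => by simpa [hy] using hy.choose_spec⟩

/-- Defined exactly on `pim α` when `f` is a preimage choice; unlike `y ∈ pim α`, the test
`α (f y) = some y` is decidable. -/
def partialSection [DecidableEq V] (α : V → Option V) (f : V → V) : V → Option V :=
  fun y => if α (f y) = some y then some (f y) else none

lemma partialSection_eq_some [DecidableEq V] {α : V → Option V} {f : V → V} {y w : V} :
    partialSection α f y = some w ↔ α w = some y ∧ w = f y := by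
  unfold partialSection
  split_ifs with h <;> aesop

lemma pmul_pmul_partialSection [DecidableEq V] {α : V → Option V} {f : V → V}
    (hf : IsPreimageChoice α f) : pmul (pmul α (partialSection α f)) α = α := by
  funext x
  rcases hx : α x with _ | y
  · simp [pmul, hx]
  · have hy : α (f y) = some y := hf y ⟨x, hx⟩
    simp [pmul, hx, partialSection, hy]

lemma exists_apply_eq_some_of_pmul_pmul_eq {α β : V → Option V}
    (h : pmul (pmul α β) α = α) {y : V} (hy : y ∈ pim α) :
    ∃ w, β y = some w ∧ α w = some y := by
  obtain ⟨x, hx⟩ := hy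
  have := congrFun h x
  simpa [pmul, hx, Option.bind_eq_some_iff] using this

end PartialMaps

section StarGraph

variable {n : ℕ}

lemma edge_irrefl (u : Fin n) : ¬ edge u u := by
  simp [edge]

lemma edge_comm {u v : Fin n} : edge u v ↔ edge v u := by
  unfold edge
  exact or_comm

lemma IsPsEnd.isPEnd {α : Fin n → Option (Fin n)} (h : IsPsEnd α) : IsPEnd α :=
  fun u v a b hu hv => (h u v a b hu hv).mp

lemma IsPEnd.isPwEnd {α : Fin n → Option (Fin n)} (h : IsPEnd α) : IsPwEnd α :=
  fun u v a b hu hv he _ => h u v a b hu hv he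

lemma IsPsEnd.isPswEnd {α : Fin n → Option (Fin n)} (h : IsPsEnd α) : IsPswEnd α := by
  intro u v a b hu hv
  refine ⟨fun he => (h u v a b hu hv).mp he.1, fun hab => ⟨(h u v a b hu hv).mpr hab, ?_⟩⟩
  rintro rfl
  exact edge_irrefl a hab

lemma IsPswEnd.isPwEnd {α : Fin n → Option (Fin n)} (h : IsPswEnd α) : IsPwEnd α :=
  fun u v a b hu hv he hab => (h u v a b hu hv).mp ⟨he, hab⟩

lemma PAutS_subset {M : Set (Fin n → Option (Fin n))}
    (hM : M = PsEndS n ∨ M = PswEndS n ∨ M = IEndS n ∨ M = PEndS n ∨ M = PwEndS n) :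
    PAutS n ⊆ M := by
  rintro α ⟨hinj, hs⟩
  rcases hM with rfl | rfl | rfl | rfl | rfl
  exacts [hs, hs.isPswEnd, ⟨hinj, hs.isPEnd⟩, hs.isPEnd, hs.isPEnd.isPwEnd]

lemma subset_PwEndS {M : Set (Fin n → Option (Fin n))}
    (hM : M = PsEndS n ∨ M = PswEndS n ∨ M = IEndS n ∨ M = PEndS n ∨ M = PwEndS n) :
    M ⊆ PwEndS n := by
  intro α hα
  rcases hM with rfl | rfl | rfl | rfl | rfl
  exacts [hα.isPEnd.isPwEnd, hα.isPwEnd, hα.2.isPwEnd, hα.isPwEnd, hα]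

def IsEdgeLiftingPreimageChoice (α : Fin n → Option (Fin n)) (f : Fin n → Fin n) : Prop :=
  IsPreimageChoice α f ∧ ∀ u ∈ pim α, ∀ v ∈ pim α, edge u v → edge (f u) (f v)

lemma partialSection_mem_PAutS {α : Fin n → Option (Fin n)} {f : Fin n → Fin n}
    (hα : IsPwEnd α) (hf : IsEdgeLiftingPreimageChoice α f) : partialSection α f ∈ PAutS n := by
  refine ⟨fun u v a hu hv => ?_, fun u v a b hu hv => ?_⟩
  · obtain ⟨hu, -⟩ := partialSection_eq_some.mp hu
    obtain ⟨hv, -⟩ := partialSection_eq_some.mp hv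
    exact Option.some.inj (hu.symm.trans hv)
  · obtain ⟨hu, rfl⟩ := partialSection_eq_some.mp hu
    obtain ⟨hv, rfl⟩ := partialSection_eq_some.mp hv
    refine ⟨hf.2 u ⟨_, hu⟩ v ⟨_, hv⟩, fun he => hα _ _ u v hu hv he ?_⟩
    rintro rfl
    exact edge_irrefl _ he

lemma regularIn_iff_exists_isEdgeLiftingPreimageChoice {M : Set (Fin n → Option (Fin n))}
    (hM : M = PsEndS n ∨ M = PswEndS n ∨ M = IEndS n ∨ M = PEndS n ∨ M = PwEndS n)
    {α : Fin n → Option (Fin n)} (hα : α ∈ M) :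
    RegularIn M α ↔ ∃ f, IsEdgeLiftingPreimageChoice α f := by
  constructor
  · rintro ⟨β, hβ, hαβα⟩
    have hpre := fun y (hy : y ∈ pim α) => exists_apply_eq_some_of_pmul_pmul_eq hαβα hy
    refine ⟨fun y => (β y).getD y, fun y hy => ?_, fun u hu v hv he => ?_⟩
    · obtain ⟨w, hβy, hw⟩ := hpre y hy
      simpa [hβy] using hw
    · obtain ⟨a, hβu, ha⟩ := hpre u hu
      obtain ⟨b, hβv, hb⟩ := hpre v hv
      simp only [hβu, hβv, Option.getD_some]
      refine subset_PwEndS hM hβ u v a b hβu hβv he ?_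
      rintro rfl
      exact edge_irrefl u (Option.some.inj (ha.symm.trans hb) ▸ he)
  · rintro ⟨f, hf⟩
    exact ⟨partialSection α f,
      PAutS_subset hM (partialSection_mem_PAutS (subset_PwEndS hM hα) hf),
      pmul_pmul_partialSection hf.1⟩

variable {z : Fin n}

lemma edge_iff_of_val_eq_zero (hz : z.val = 0) {u v : Fin n} :
    edge u v ↔ (u = z ∧ v ≠ z) ∨ (v = z ∧ u ≠ z) := by
  simp [edge, Fin.ext_iff, hz]

lemma edge_center (hz : z.val = 0) {v : Fin n} (hv : v ≠ z) : edge z v :=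
  (edge_iff_of_val_eq_zero hz).mpr (Or.inl ⟨rfl, hv⟩)

lemma not_edge_of_ne_center (hz : z.val = 0) {u v : Fin n} (hu : u ≠ z) (hv : v ≠ z) :
    ¬ edge u v := by
  rw [edge_iff_of_val_eq_zero hz]
  tauto

lemma apply_center_eq_of_edge (hz : z.val = 0) {α : Fin n → Option (Fin n)} (hα : IsPwEnd α)
    {c u v : Fin n} (hc : α z = some c) (hu : u ∈ pim α) (hv : v ∈ pim α) (he : edge u v) :
    c = u ∨ c = v := by
  wlog huz : u = z generalizing u v
  · have hvz : v = z := by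
      rw [edge_iff_of_val_eq_zero hz] at he
      tauto
    exact (this hv hu (edge_comm.mp he) hvz).symm
  subst huz
  obtain ⟨x, hx⟩ := hv
  by_cases hxz : x = u
  · subst hxz
    exact Or.inr (Option.some.inj (hc.symm.trans hx))
  by_contra! ⟨hcu, hcv⟩
  have hvu : v ≠ u := by
    rintro rfl
    exact edge_irrefl v he
  exact not_edge_of_ne_center hz hvu hcu
    (hα x u v c hx hc (edge_comm.mp (edge_center hz hxz)) (Ne.symm hcv))

lemma image_not_edge (hz : z.val = 0) {α : Fin n → Option (Fin n)}
    (h : pim α = {z} ∨ z ∉ pim α) {u v : Fin n} (hu : u ∈ pim α) (hv : v ∈ pim α) :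
    ¬ edge u v := by
  rw [edge_iff_of_val_eq_zero hz]
  rcases h with h | h
  · rw [h, Set.mem_singleton_iff] at hu hv
    tauto
  · rintro (⟨rfl, -⟩ | ⟨rfl, -⟩) <;> contradiction

lemma exists_isEdgeLiftingPreimageChoice_of_apply_center_eq_some (hz : z.val = 0)
    {α : Fin n → Option (Fin n)} (hα : IsPwEnd α) {c : Fin n} (hc : α z = some c) :
    ∃ f, IsEdgeLiftingPreimageChoice α f := by
  obtain ⟨g, hg⟩ := exists_isPreimageChoice α
  have hg_ne : ∀ y ∈ pim α, c ≠ y → g y ≠ z := fun y hy hcy hgy =>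
    hcy (Option.some.inj (hc.symm.trans (hgy ▸ hg y hy)))
  refine ⟨fun y => if c = y then z else g y, fun y hy => ?_, fun u hu v hv he => ?_⟩
  · dsimp only
    split_ifs with hcy
    · rw [hc, hcy]
    · exact hg y hy
  · rcases apply_center_eq_of_edge hz hα hc hu hv he with rfl | rfl
    · have hcv : c ≠ v := by rintro rfl; exact edge_irrefl c he
      simpa [hcv] using edge_center hz (hg_ne v hv hcv)
    · have hcu : c ≠ u := by rintro rfl; exact edge_irrefl c he
      simpa [hcu] using edge_comm.mp (edge_center hz (hg_ne u hu hcu))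

lemma exists_isEdgeLiftingPreimageChoice_iff (hz : z.val = 0) {α : Fin n → Option (Fin n)}
    (hα : IsPwEnd α) :
    (∃ f, IsEdgeLiftingPreimageChoice α f) ↔ (z ∈ pdom α ∨ pim α = {z} ∨ z ∉ pim α) := by
  constructor
  · rintro ⟨f, hf, hlift⟩
    by_contra! ⟨hdom, him, hz_im⟩
    obtain ⟨b, hb, hbz⟩ : ∃ b ∈ pim α, b ≠ z := by
      by_contra! hb
      exact him (Set.eq_singleton_iff_unique_mem.mpr ⟨hz_im, hb⟩)
    have hf_ne : ∀ y ∈ pim α, f y ≠ z := fun y hy hfy => hdom (by simp [pdom, ← hfy, hf y hy])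
    exact not_edge_of_ne_center hz (hf_ne z hz_im) (hf_ne b hb)
      (hlift z hz_im b hb (edge_center hz hbz))
  · rintro (hdom | hedgeless)
    · obtain ⟨c, hc⟩ := Option.ne_none_iff_exists'.mp hdom
      exact exists_isEdgeLiftingPreimageChoice_of_apply_center_eq_some hz hα hc
    · obtain ⟨g, hg⟩ := exists_isPreimageChoice α
      exact ⟨g, hg, fun u hu v hv he => absurd he (image_not_edge hz hedgeless hu hv)⟩

end StarGraph

theorem stmt12 (n : ℕ) (hn : 1 ≤ n) (M : Set (Fin n → Option (Fin n)))
    (hM : M = PsEndS n ∨ M = PswEndS n ∨ M = IEndS n ∨ M = PEndS n ∨ M = PwEndS n)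
    (α : Fin n → Option (Fin n)) (hα : α ∈ M) :
    RegularIn M α ↔
      ((⟨0, hn⟩ : Fin n) ∈ pdom α ∨ pim α = {(⟨0, hn⟩ : Fin n)} ∨ (⟨0, hn⟩ : Fin n) ∉ pim α) := by
  rw [regularIn_iff_exists_isEdgeLiftingPreimageChoice hM hα]
  exact exists_isEdgeLiftingPreimageChoice_iff rfl (subset_PwEndS hM hα)
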